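/- Let K ≥ 1 and j ≥ 0 be integers and let a, b be real numbers. Set q := ⌊a + 2bK⌋ and ω := a + 2bK − q. Then I_{C₁}(K,j;a−q,b) = i · exp(2πi a K + 2πi b K²) · ∑_{l=0}^{j} i^l · binom(j,l) · Ĩ_{C₀}(K,l; ω, b). -/

import Mathlib

open scoped BigOperators

/-- `I_{C₁}(K,j;c,b)`: the contour integral of `z^j exp(2πi c z + 2πi b z²)`
along the vertical segment from `K` to `K+iK`. -/
noncomputable def IC1 (K j : ℕ) (c b : ℝ) : ℂ :=
  Complex.I * ((K : ℂ) ^ j)⁻¹ *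
    ∫ t in (0 : ℝ)..(K : ℝ), ((K : ℂ) + Complex.I * (t : ℂ)) ^ j *
      Complex.exp (2 * (Real.pi : ℂ) * Complex.I * (c : ℂ) *
          ((K : ℂ) + Complex.I * (t : ℂ)) +
        2 * (Real.pi : ℂ) * Complex.I * (b : ℂ) *
          ((K : ℂ) + Complex.I * (t : ℂ)) ^ 2)

/-- `Ĩ_{C₀}(K,l;w,b) = K^{-l} ∫_0^K t^l exp(−2πwt − 2πib t²) dt`. -/
noncomputable def ItC0 (K l : ℕ) (w b : ℝ) : ℂ :=
  ((K : ℂ) ^ l)⁻¹ * ∫ t in (0 : ℝ)..(K : ℝ), (t : ℂ) ^ l *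
    Complex.exp (-2 * (Real.pi : ℂ) * (w : ℂ) * (t : ℂ) -
      2 * (Real.pi : ℂ) * Complex.I * (b : ℂ) * (t : ℂ) ^ 2)

/-!
On the segment `z = K + it` the phase `2πi(a - q)z + 2πibz²` equals its value at `K` plus
`-2πωt - 2πibt²`, up to the integer multiple `-qK` of `2πi`; this is where `ω = a + 2bK - q`
comes from. Expanding `(K + it)^j` binomially then splits `I_{C₁}` into the integrals
`Ĩ_{C₀}(K,l;ω,b)`, and `K^{-j} K^{j-l} = K^{-l}` matches the normalisations.
-/

open Complex MeasureTheory
open scoped Real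

theorem intervalIntegral.integral_add_mul_pow_mul {f : ℝ → ℂ} (hf : Continuous f)
    (z c : ℂ) (j : ℕ) (u v : ℝ) :
    ∫ t in u..v, (z + c * t) ^ j * f t =
      ∑ l ∈ Finset.range (j + 1), c ^ l * (j.choose l : ℂ) * z ^ (j - l) *
        ∫ t in u..v, (t : ℂ) ^ l * f t := by
  have hterm (l : ℕ) : IntervalIntegrable
      (fun t : ℝ => c ^ l * (j.choose l : ℂ) * z ^ (j - l) * ((t : ℂ) ^ l * f t)) volume u v :=
    (by fun_prop : Continuous _).intervalIntegrable u v
  simp_rw [← intervalIntegral.integral_const_mul]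
  rw [← intervalIntegral.integral_finsetSum fun l _ => hterm l]
  refine intervalIntegral.integral_congr fun t _ => ?_
  simp only [add_comm z, add_pow, Finset.sum_mul]
  refine Finset.sum_congr rfl fun l _ => ?_
  ring

theorem exp_phase_vertical (a b t : ℝ) (K q : ℤ) :
    exp (2 * π * I * ((a - q : ℝ) : ℂ) * (K + I * t) + 2 * π * I * b * (K + I * t) ^ 2) =
      exp (2 * π * I * a * K + 2 * π * I * b * K ^ 2) *
        exp (-2 * π * ((a + 2 * b * K - q : ℝ) : ℂ) * t - 2 * π * I * b * t ^ 2) := by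
  rw [← exp_add, ← mul_one (exp (_ + _)), ← exp_int_mul_two_pi_mul_I (q * K), ← exp_add]
  congr 1
  push_cast
  linear_combination (2 * π * (a - q) * t + 4 * π * b * K * t + 2 * π * b * t ^ 2 * I) * I_sq

/-- Evaluation of the isolated term `I_{C₁}(K,j;a−q,b)` in terms of the
integrals `Ĩ_{C₀}(K,l;ω,b)`. -/
theorem IC1_top_term_eq (K : ℕ) (hK : 1 ≤ K) (j : ℕ) (a b : ℝ) :
    IC1 K j (a - ((⌊a + 2 * b * K⌋ : ℤ) : ℝ)) b =
      Complex.I * Complex.exp (2 * (Real.pi : ℂ) * Complex.I * (a : ℂ) * (K : ℂ) +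
          2 * (Real.pi : ℂ) * Complex.I * (b : ℂ) * (K : ℂ) ^ 2) *
        ∑ l ∈ Finset.range (j + 1), Complex.I ^ l * (j.choose l : ℂ) *
          ItC0 K l (Int.fract (a + 2 * b * K)) b := by
  set E := exp (2 * π * I * a * K + 2 * π * I * b * K ^ 2)
  set g : ℝ → ℂ := fun t =>
    exp (-2 * π * ((Int.fract (a + 2 * b * K) : ℝ) : ℂ) * t - 2 * π * I * b * t ^ 2)
  have hK0 : (K : ℂ) ≠ 0 := Nat.cast_ne_zero.mpr (by omega)
  have hphase (t : ℝ) := exp_phase_vertical a b t K ⌊a + 2 * b * K⌋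
  simp only [Int.cast_natCast, Int.self_sub_floor] at hphase
  calc IC1 K j (a - ⌊a + 2 * b * K⌋) b
      = I * ((K : ℂ) ^ j)⁻¹ * E * ∫ t in (0 : ℝ)..K, (K + I * t) ^ j * g t := by
        rw [IC1, mul_assoc _ E, ← intervalIntegral.integral_const_mul E]
        congr 1
        refine intervalIntegral.integral_congr fun t _ => ?_
        rw [hphase]
        ring
    _ = _ := by
        rw [intervalIntegral.integral_add_mul_pow_mul (by fun_prop), Finset.mul_sum, Finset.mul_sum]
        refine Finset.sum_congr rfl fun l hl => ?_
        have hcoef : ((K : ℂ) ^ j)⁻¹ * (K : ℂ) ^ (j - l) = ((K : ℂ) ^ l)⁻¹ := by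
          rw [pow_sub₀ _ hK0 (Nat.lt_succ_iff.mp (Finset.mem_range.mp hl)),
            inv_mul_cancel_left₀ (pow_ne_zero _ hK0)]
        rw [ItC0, ← hcoef]
        ring
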